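/- Let Y ∈ ℍ^{M×N} admit a QSVD Y = U * D * Vᴴ with singular values σ : Fin (min M N) → ℝ. Then the squared Frobenius norm of Y equals the sum of the squared singular values: Σ_{i,j} ‖Y i j‖² = Σ_{i=1}^{min(M,N)} (σ i)². -/

import Mathlib

/-! Since `‖A‖_F² = Re tr (A Aᴴ)` and `(A W)(A W)ᴴ = A Aᴴ` whenever `W Wᴴ = 1`, right
multiplication by such a `W` preserves the squared Frobenius norm; conjugate transposition
gives the same for left multiplication by `U` with `Uᴴ U = 1`. Hence `‖U D Vᴴ‖_F² = ‖D‖_F²`,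
and the only nonzero entries of the rectangular diagonal `D` are the `σ i`. -/

noncomputable section

open Matrix

abbrev ℍ : Type := Quaternion ℝ

/-- The `M × N` rectangular diagonal quaternion matrix of `σ : Fin K → ℝ`:
entry `(i, j)` is `σ i` when `i` and `j` have equal numerical index (below `K`), else `0`. -/
def rectDiag (M N : ℕ) {K : ℕ} (σ : Fin K → ℝ) : Matrix (Fin M) (Fin N) ℍ :=
  Matrix.of fun i j =>
    if h : (i : ℕ) = (j : ℕ) ∧ (i : ℕ) < K then ((σ ⟨i, h.2⟩ : ℝ) : ℍ) else 0

/-- A square quaternion matrix is unitary if `A * Aᴴ = Aᴴ * A = 1`. -/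
def IsUnitary {n : ℕ} (A : Matrix (Fin n) (Fin n) ℍ) : Prop :=
  A * Aᴴ = 1 ∧ Aᴴ * A = 1

/-- `IsQSVD A U σ V` : `A = U * D * Vᴴ` is a quaternion singular value decomposition of `A`,
with `U`, `V` unitary and `σ` a nonincreasing nonnegative family of singular values. -/
def IsQSVD {M N : ℕ} (A : Matrix (Fin M) (Fin N) ℍ)
    (U : Matrix (Fin M) (Fin M) ℍ) (σ : Fin (min M N) → ℝ)
    (V : Matrix (Fin N) (Fin N) ℍ) : Prop :=
  IsUnitary U ∧ IsUnitary V ∧ Antitone σ ∧ (∀ i, 0 ≤ σ i) ∧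
    A = U * rectDiag M N σ * Vᴴ

/-- `A` admits a QSVD with singular values `σ`. -/
def HasQSVD {M N : ℕ} (A : Matrix (Fin M) (Fin N) ℍ) (σ : Fin (min M N) → ℝ) : Prop :=
  ∃ U V, IsQSVD A U σ V

lemma Quaternion.re_sum {ι : Type*} (s : Finset ι) (f : ι → ℍ) :
    (∑ i ∈ s, f i).re = ∑ i ∈ s, (f i).re :=
  map_sum (QuaternionAlgebra.reₗ (c₁ := -1) (c₂ := 0) (c₃ := -1)) f s

lemma Quaternion.norm_sq_eq_re_mul_star (a : ℍ) : ‖a‖ ^ 2 = (a * star a).re := by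
  rw [sq, ← Quaternion.normSq_eq_norm_mul_self, Quaternion.normSq_def]

section Frobenius

variable {m n p : Type*} [Fintype m] [Fintype n] [Fintype p]

lemma sum_norm_sq_eq_sum_re_mul_conjTranspose (A : Matrix m n ℍ) :
    ∑ i, ∑ j, ‖A i j‖ ^ 2 = ∑ i, ((A * Aᴴ) i i).re := by
  simp only [mul_apply, conjTranspose_apply, Quaternion.re_sum,
    Quaternion.norm_sq_eq_re_mul_star]

lemma sum_norm_sq_conjTranspose (A : Matrix m n ℍ) :
    ∑ i, ∑ j, ‖Aᴴ i j‖ ^ 2 = ∑ i, ∑ j, ‖A i j‖ ^ 2 := by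
  rw [Finset.sum_comm]
  simp only [conjTranspose_apply, Quaternion.norm_star]

lemma sum_norm_sq_mul_of_mul_conjTranspose_eq_one [DecidableEq n] (A : Matrix m n ℍ)
    {W : Matrix n p ℍ} (hW : W * Wᴴ = 1) :
    ∑ i, ∑ j, ‖(A * W) i j‖ ^ 2 = ∑ i, ∑ j, ‖A i j‖ ^ 2 := by
  simp only [sum_norm_sq_eq_sum_re_mul_conjTranspose, conjTranspose_mul, Matrix.mul_assoc,
    ← Matrix.mul_assoc W, hW, Matrix.one_mul]

lemma sum_norm_sq_mul_of_conjTranspose_mul_eq_one [DecidableEq m] {U : Matrix p m ℍ}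
    (hU : Uᴴ * U = 1) (A : Matrix m n ℍ) :
    ∑ i, ∑ j, ‖(U * A) i j‖ ^ 2 = ∑ i, ∑ j, ‖A i j‖ ^ 2 := by
  have hU' : Uᴴ * Uᴴᴴ = 1 := by rwa [conjTranspose_conjTranspose]
  rw [← sum_norm_sq_conjTranspose, conjTranspose_mul,
    sum_norm_sq_mul_of_mul_conjTranspose_eq_one _ hU', sum_norm_sq_conjTranspose]

end Frobenius

lemma sum_norm_sq_rectDiag {M N K : ℕ} (hM : K ≤ M) (hN : K ≤ N) (σ : Fin K → ℝ) :
    ∑ i, ∑ j, ‖rectDiag M N σ i j‖ ^ 2 = ∑ k, σ k ^ 2 := by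
  rw [← Fintype.sum_prod_type']
  symm
  refine Fintype.sum_of_injective (fun k => (Fin.castLE hM k, Fin.castLE hN k)) ?_ _ _ ?_ ?_
  · intro k l hkl
    simpa [Fin.ext_iff] using congrArg Prod.fst hkl
  · rintro ⟨i, j⟩ hij
    have hoff : ¬((i : ℕ) = j ∧ (i : ℕ) < K) := fun h =>
      hij ⟨⟨i, h.2⟩, by simp [Prod.ext_iff, Fin.ext_iff, h.1]⟩
    simp [rectDiag, hoff]
  · intro k
    simp [rectDiag]

/-- The squared Frobenius norm of a quaternion matrix equals the sum of the squares of
its singular values. -/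
theorem qsvd_frobenius_eq_sum_sq {M N : ℕ} (Y : Matrix (Fin M) (Fin N) ℍ)
    (σ : Fin (min M N) → ℝ) (hY : HasQSVD Y σ) :
    ∑ i, ∑ j, ‖Y i j‖ ^ 2 = ∑ i, (σ i) ^ 2 := by
  obtain ⟨U, V, hU, hV, -, -, rfl⟩ := hY
  have hV' : Vᴴ * Vᴴᴴ = 1 := by rw [conjTranspose_conjTranspose, hV.2]
  rw [sum_norm_sq_mul_of_mul_conjTranspose_eq_one _ hV',
    sum_norm_sq_mul_of_conjTranspose_mul_eq_one hU.2,
    sum_norm_sq_rectDiag (min_le_left M N) (min_le_right M N)]
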